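/- Let μ ∈ 𝒫₂(ℝ^d) be centred with σ_μ > 0 and, for λ > 1, let ν = (λ·)_#μ. Then Z₂(μ,ν) = (1/2)(σ_μ + σ_ν)·W₂(μ,ν); i.e., the upper bound Z₂ ≤ (1/2)(σ_μ+σ_ν)W₂ is saturated by pairs related by a centred dilation. -/

import Mathlib

open MeasureTheory
open scoped ENNReal

noncomputable def Z2 {E : Type*} [NormedAddCommGroup E] [InnerProductSpace ℝ E]
    [CompleteSpace E] [MeasurableSpace E] (μ ν : Measure E) : ℝ≥0∞ :=
  ⨆ (u : E → ℝ) (_ : ContDiff ℝ 1 u) (_ : LipschitzWith 1 (gradient u)),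
    ENNReal.ofReal (∫ x, u x ∂ν - ∫ x, u x ∂μ)

noncomputable def W2sq {E : Type*} [NormedAddCommGroup E] [MeasurableSpace E]
    (μ ν : Measure E) : ℝ≥0∞ :=
  ⨅ (γ : Measure (E × E)) (_ : γ.map Prod.fst = μ) (_ : γ.map Prod.snd = ν),
    ∫⁻ p, ENNReal.ofReal (‖p.1 - p.2‖ ^ 2) ∂γ

noncomputable def W2 {E : Type*} [NormedAddCommGroup E] [MeasurableSpace E]
    (μ ν : Measure E) : ℝ :=
  Real.sqrt (W2sq μ ν).toReal

noncomputable def bary {E : Type*} [NormedAddCommGroup E] [NormedSpace ℝ E]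
    [CompleteSpace E] [MeasurableSpace E] (μ : Measure E) : E :=
  ∫ x, x ∂μ

noncomputable def var2 {E : Type*} [NormedAddCommGroup E] [NormedSpace ℝ E]
    [CompleteSpace E] [MeasurableSpace E] (μ : Measure E) : ℝ :=
  ∫ x, ‖x - bary μ‖ ^ 2 ∂μ

section Aux

open InnerProductSpace

local notation "⟪" x ", " y "⟫" => @inner ℝ _ _ x y

lemma grad_inner {E : Type*} [NormedAddCommGroup E] [InnerProductSpace ℝ E] [CompleteSpace E]
    (u : E → ℝ) (z v : E) : ⟪gradient u z, v⟫ = fderiv ℝ u z v :=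
  InnerProductSpace.toDual_symm_apply

lemma taylor_abs {E : Type*} [NormedAddCommGroup E] [InnerProductSpace ℝ E] [CompleteSpace E]
    {u : E → ℝ} (hu : ContDiff ℝ 1 u) (hL : LipschitzWith 1 (gradient u)) (x y : E) :
    |u y - u x - ⟪gradient u x, y - x⟫| ≤ ‖y - x‖ ^ 2 / 2 := by
  set g' : ℝ → ℝ := fun t => ⟪gradient u (x + t • (y - x)), y - x⟫ with hg'
  have hdiff : ∀ z, HasFDerivAt u (fderiv ℝ u z) z :=
    fun z => (hu.differentiable one_ne_zero z).hasFDerivAt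
  have hg : ∀ t : ℝ, HasDerivAt (fun t => u (x + t • (y - x))) (g' t) t := by
    intro t
    have hγ : HasDerivAt (fun t : ℝ => x + t • (y - x)) (y - x) t := by
      simpa using ((hasDerivAt_id t).smul_const (y - x)).const_add x
    have := (hdiff (x + t • (y - x))).comp_hasDerivAt t hγ
    exact this.congr_deriv (grad_inner u _ _).symm
  have hcont : Continuous g' := by
    exact Continuous.inner
      (hL.continuous.comp (by continuity)) continuous_const
  have key : u y - u x = ∫ t in (0:ℝ)..1, g' t := by
    have := intervalIntegral.integral_eq_sub_of_hasDerivAt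
      (f := fun t => u (x + t • (y - x))) (f' := g') (a := 0) (b := 1)
      (fun t _ => hg t) (hcont.intervalIntegrable 0 1)
    simpa using this.symm
  have hconst : ⟪gradient u x, y - x⟫ = ∫ t in (0:ℝ)..1, g' 0 := by
    simp [hg']
  have hbound : ∀ t ∈ Set.Icc (0:ℝ) 1, |g' t - g' 0| ≤ t * ‖y - x‖ ^ 2 := by
    intro t ht
    have h1 : g' t - g' 0 = ⟪gradient u (x + t • (y - x)) - gradient u x, y - x⟫ := by
      simp [hg', inner_sub_left]
    rw [h1]
    calc |⟪gradient u (x + t • (y - x)) - gradient u x, y - x⟫|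
        ≤ ‖gradient u (x + t • (y - x)) - gradient u x‖ * ‖y - x‖ :=
          abs_real_inner_le_norm _ _
      _ ≤ ‖t • (y - x)‖ * ‖y - x‖ := by
          gcongr
          have := hL.dist_le_mul (x + t • (y - x)) x
          simpa [dist_eq_norm] using this
      _ = t * ‖y - x‖ ^ 2 := by
          rw [norm_smul]; simp [Real.norm_eq_abs, abs_of_nonneg ht.1]; ring
  rw [key, hconst, ← intervalIntegral.integral_sub (hcont.intervalIntegrable 0 1)
    intervalIntegrable_const]
  calc |∫ t in (0:ℝ)..1, (g' t - g' 0)|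
      ≤ ∫ t in (0:ℝ)..1, |g' t - g' 0| :=
        intervalIntegral.abs_integral_le_integral_abs zero_le_one
    _ ≤ ∫ t in (0:ℝ)..1, t * ‖y - x‖ ^ 2 := by
        apply intervalIntegral.integral_mono_on zero_le_one
          ((hcont.sub continuous_const).abs.intervalIntegrable 0 1)
          ((continuous_id.mul continuous_const).intervalIntegrable 0 1)
        exact hbound
    _ = ‖y - x‖ ^ 2 / 2 := by
        rw [intervalIntegral.integral_mul_const, integral_id]; ring

lemma grad_halfnormsq {E : Type*} [NormedAddCommGroup E] [InnerProductSpace ℝ E]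
    [CompleteSpace E] : gradient (fun x : E => ‖x‖ ^ 2 / 2) = id := by
  apply gradient_eq
  intro x
  rw [hasGradientAt_iff_hasFDerivAt]
  have h := (hasStrictFDerivAt_norm_sq x).hasFDerivAt.const_smul (R := ℝ) (1/2 : ℝ)
  have he : ((1/2 : ℝ) • fun x : E => ‖x‖ ^ 2) = fun x : E => ‖x‖ ^ 2 / 2 := by
    ext y; simp only [Pi.smul_apply, smul_eq_mul]; ring
  rw [he] at h
  refine h.congr_fderiv ?_
  ext v
  simp [toDual_apply_apply, two_smul, real_inner_comm]
  ring

lemma normsq_cont {E : Type*} [NormedAddCommGroup E] : Continuous fun x : E => ‖x‖ ^ 2 :=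
  continuous_norm.pow 2

variable {d : ℕ}

lemma nu_sq_integral (μ : Measure (EuclideanSpace ℝ (Fin d)))
    (hμ : Integrable (fun x => ‖x‖ ^ 2) μ) (l : ℝ) :
    ∫ x, ‖x‖ ^ 2 ∂(μ.map (fun x => l • x)) = l ^ 2 * ∫ x, ‖x‖ ^ 2 ∂μ := by
  rw [integral_map (by fun_prop) normsq_cont.aestronglyMeasurable]
  rw [← integral_const_mul]
  congr 1 with x
  rw [norm_smul]
  simp [Real.norm_eq_abs, mul_pow, sq_abs]

lemma nu_sq_integrable (μ : Measure (EuclideanSpace ℝ (Fin d)))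
    (hμ : Integrable (fun x => ‖x‖ ^ 2) μ) (l : ℝ) :
    Integrable (fun x => ‖x‖ ^ 2) (μ.map (fun x => l • x)) := by
  rw [integrable_map_measure normsq_cont.aestronglyMeasurable (by fun_prop)]
  have : ((fun x => ‖x‖ ^ 2) ∘ (fun x : EuclideanSpace ℝ (Fin d) => l • x))
      = fun x => l ^ 2 * ‖x‖ ^ 2 := by
    ext x; simp [Function.comp, norm_smul, Real.norm_eq_abs, mul_pow, sq_abs]
  rw [this]
  exact hμ.const_mul _

lemma w2sq_dilation (μ : Measure (EuclideanSpace ℝ (Fin d))) [IsProbabilityMeasure μ]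
    (hμ : Integrable (fun x => ‖x‖ ^ 2) μ) (l : ℝ) (hl : 1 < l) :
    W2sq μ (μ.map (fun x => l • x))
      = ENNReal.ofReal ((l - 1) ^ 2 * ∫ x, ‖x‖ ^ 2 ∂μ) := by
  set E := EuclideanSpace ℝ (Fin d)
  set ν := μ.map (fun x : E => l • x) with hν
  have hl0 : (0:ℝ) < l := lt_trans one_pos hl
  set V := ∫ x, ‖x‖ ^ 2 ∂μ with hV
  have hmeas : Measurable (fun x : E => l • x) := by fun_prop
  apply le_antisymm
  · -- upper bound via the coupling (x, l•x)
    set γ₀ : Measure (E × E) := μ.map (fun x => (x, l • x)) with hγ₀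
    have hm2 : Measurable (fun x : E => (x, l • x)) := measurable_id.prodMk hmeas
    have h1 : γ₀.map Prod.fst = μ := by
      rw [hγ₀, Measure.map_map measurable_fst hm2]
      have : (Prod.fst ∘ fun x : E => (x, l • x)) = id := rfl
      rw [this, Measure.map_id]
    have h2 : γ₀.map Prod.snd = ν := by
      rw [hγ₀, Measure.map_map measurable_snd hm2, hν]
      rfl
    refine le_trans (iInf_le_of_le γ₀ (iInf_le_of_le h1 (iInf_le_of_le h2 le_rfl))) ?_
    rw [hγ₀, lintegral_map (by fun_prop) hm2]
    have hval : ∀ x : E, ‖x - l • x‖ ^ 2 = (l - 1) ^ 2 * ‖x‖ ^ 2 := by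
      intro x
      have h : x - l • x = (1 - l) • x := by rw [sub_smul, one_smul]
      rw [h, norm_smul, mul_pow, Real.norm_eq_abs, sq_abs]
      ring
    simp_rw [hval]
    rw [← ofReal_integral_eq_lintegral_ofReal (hμ.const_mul _)
      (ae_of_all _ fun x => by positivity), integral_const_mul]
  · -- lower bound valid for every coupling
    refine le_iInf fun γ => le_iInf fun h1 => le_iInf fun h2 => ?_
    have hγ1 : Integrable (fun p : E × E => ‖p.1‖ ^ 2) γ := by
      have h := hμ
      rw [← h1, integrable_map_measure normsq_cont.aestronglyMeasurable
        measurable_fst.aemeasurable] at h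
      exact h
    have hγ2 : Integrable (fun p : E × E => ‖p.2‖ ^ 2) γ := by
      have h := nu_sq_integrable μ hμ l
      rw [← hν, ← h2, integrable_map_measure normsq_cont.aestronglyMeasurable
        measurable_snd.aemeasurable] at h
      exact h
    have hint : Integrable (fun p : E × E => ‖p.1 - p.2‖ ^ 2) γ := by
      refine Integrable.mono' ((hγ1.const_mul 2).add (hγ2.const_mul 2))
        ((continuous_fst.sub continuous_snd).norm.pow 2).aestronglyMeasurable
        (ae_of_all _ fun p => ?_)
      simp only [Pi.add_apply]
      have h := norm_sub_le p.1 p.2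
      rw [Real.norm_eq_abs, abs_of_nonneg (by positivity)]
      nlinarith [sq_nonneg (‖p.1‖ - ‖p.2‖), norm_nonneg p.1, norm_nonneg p.2,
        norm_nonneg (p.1 - p.2)]
    rw [← ofReal_integral_eq_lintegral_ofReal hint (ae_of_all _ fun p => by positivity)]
    apply ENNReal.ofReal_le_ofReal
    have marg1 : ∫ p : E × E, ‖p.1‖ ^ 2 ∂γ = V := by
      have h := integral_map (μ := γ) measurable_fst.aemeasurable
        (f := fun x : E => ‖x‖ ^ 2) normsq_cont.aestronglyMeasurable
      rw [h1] at h
      exact h.symm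
    have marg2 : ∫ p : E × E, ‖p.2‖ ^ 2 ∂γ = l ^ 2 * V := by
      have h := integral_map (μ := γ) measurable_snd.aemeasurable
        (f := fun x : E => ‖x‖ ^ 2) normsq_cont.aestronglyMeasurable
      rw [h2] at h
      rw [← h, hν]
      exact nu_sq_integral μ hμ l
    have key : ∫ p : E × E, ((1 - l) * ‖p.1‖ ^ 2 + (1 - 1/l) * ‖p.2‖ ^ 2) ∂γ
        ≤ ∫ p : E × E, ‖p.1 - p.2‖ ^ 2 ∂γ := by
      refine integral_mono ((hγ1.const_mul _).add (hγ2.const_mul _)) hint fun p => ?_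
      have habs : |‖p.1‖ - ‖p.2‖| ≤ ‖p.1 - p.2‖ := abs_norm_sub_norm_le _ _
      have hc2 : (‖p.1‖ - ‖p.2‖) ^ 2 ≤ ‖p.1 - p.2‖ ^ 2 := by
        rw [← sq_abs (‖p.1‖ - ‖p.2‖)]
        exact pow_le_pow_left₀ (abs_nonneg _) habs 2
      have hinv : (1/l) * l = 1 := by field_simp
      have hsq : 0 ≤ (1/l) * (l * ‖p.1‖ - ‖p.2‖) ^ 2 :=
        mul_nonneg (by positivity) (sq_nonneg _)
      nlinarith [hc2, hsq, hinv, norm_nonneg p.1, norm_nonneg p.2]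
    rw [integral_add (hγ1.const_mul _) (hγ2.const_mul _), integral_const_mul,
      integral_const_mul, marg1, marg2] at key
    refine le_trans (le_of_eq ?_) key
    field_simp
    ring

lemma norm_int (μ : Measure (EuclideanSpace ℝ (Fin d)))
    (hμ : Integrable (fun x => ‖x‖ ^ 2) μ) [IsProbabilityMeasure μ] :
    Integrable (fun x : EuclideanSpace ℝ (Fin d) => ‖x‖) μ := by
  refine Integrable.mono' (g := fun x => 1 + ‖x‖ ^ 2) ((integrable_const 1).add hμ)
    continuous_norm.aestronglyMeasurable (ae_of_all _ fun x => ?_)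
  have hx : ‖x‖ ≤ 1 + ‖x‖ ^ 2 := by nlinarith [sq_nonneg (‖x‖ - 1)]
  simpa using hx

lemma pointwise_ub {E : Type*} [NormedAddCommGroup E] [InnerProductSpace ℝ E] [CompleteSpace E]
    {u : E → ℝ} (hu : ContDiff ℝ 1 u) (hL : LipschitzWith 1 (gradient u))
    {l : ℝ} (hl : 1 < l) (x : E) :
    u (l • x) - u x ≤ (l - 1) * ⟪gradient u 0, x⟫ + (l ^ 2 - 1) / 2 * ‖x‖ ^ 2 := by
  have ht := (abs_le.1 (taylor_abs hu hL x (l • x))).2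
  have hsm : l • x - x = (l - 1) • x := by rw [sub_smul, one_smul]
  rw [hsm] at ht
  rw [real_inner_smul_right, norm_smul, Real.norm_eq_abs, mul_pow, sq_abs] at ht
  have hgx : ⟪gradient u x, x⟫ ≤ ⟪gradient u 0, x⟫ + ‖x‖ ^ 2 := by
    have h1 : ⟪gradient u x - gradient u 0, x⟫ ≤ ‖gradient u x - gradient u 0‖ * ‖x‖ :=
      real_inner_le_norm _ _
    have h2 : ‖gradient u x - gradient u 0‖ ≤ ‖x‖ := by
      have := hL.dist_le_mul x 0
      simpa [dist_eq_norm] using this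
    have h3 : ⟪gradient u x, x⟫ = ⟪gradient u 0, x⟫ + ⟪gradient u x - gradient u 0, x⟫ := by
      rw [inner_sub_left]; ring
    nlinarith [norm_nonneg x, norm_nonneg (gradient u x - gradient u 0)]
  nlinarith [norm_nonneg x, sq_nonneg ‖x‖]

lemma z2_dilation (μ : Measure (EuclideanSpace ℝ (Fin d))) [IsProbabilityMeasure μ]
    (hμ : Integrable (fun x => ‖x‖ ^ 2) μ) (hcent : (∫ x, x ∂μ) = 0)
    (l : ℝ) (hl : 1 < l) :
    Z2 μ (μ.map (fun x => l • x))
      = ENNReal.ofReal ((l ^ 2 - 1) / 2 * ∫ x, ‖x‖ ^ 2 ∂μ) := by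
  set E := EuclideanSpace ℝ (Fin d)
  set ν := μ.map (fun x : E => l • x) with hν
  have hmeas : Measurable (fun x : E => l • x) := by fun_prop
  haveI : IsProbabilityMeasure ν := Measure.isProbabilityMeasure_map hmeas.aemeasurable
  set V := ∫ x, ‖x‖ ^ 2 ∂μ with hV
  have h1m : Integrable (fun x : E => ‖x‖) μ := norm_int μ hμ
  have hidInt : Integrable (fun x : E => x) μ := by
    refine Integrable.mono' (g := fun x => 1 + ‖x‖ ^ 2) ((integrable_const 1).add hμ)
      continuous_id.aestronglyMeasurable (ae_of_all _ fun x => ?_)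
    have hx : ‖x‖ ≤ 1 + ‖x‖ ^ 2 := by nlinarith [sq_nonneg (‖x‖ - 1)]
    simpa using hx
  have hν2 : Integrable (fun x : E => ‖x‖ ^ 2) ν := nu_sq_integrable μ hμ l
  have h1ν : Integrable (fun x : E => ‖x‖) ν := norm_int ν hν2
  apply le_antisymm
  · refine iSup_le fun u => iSup_le fun hu => iSup_le fun hL => ?_
    apply ENNReal.ofReal_le_ofReal
    have hucont : Continuous u := hu.continuous
    have hub : ∀ y : E, ‖u y‖ ≤ |u 0| + ‖gradient u 0‖ * ‖y‖ + ‖y‖ ^ 2 / 2 := by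
      intro y
      have h := taylor_abs hu hL 0 y
      rw [sub_zero] at h
      have hi := abs_real_inner_le_norm (gradient u 0) y
      have h3 : u y = (u y - u 0 - ⟪gradient u 0, y⟫) + u 0 + ⟪gradient u 0, y⟫ := by ring
      rw [Real.norm_eq_abs, h3]
      calc |(u y - u 0 - ⟪gradient u 0, y⟫) + u 0 + ⟪gradient u 0, y⟫|
          ≤ |(u y - u 0 - ⟪gradient u 0, y⟫) + u 0| + |⟪gradient u 0, y⟫| := abs_add_le _ _
        _ ≤ |u y - u 0 - ⟪gradient u 0, y⟫| + |u 0| + |⟪gradient u 0, y⟫| := by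
            have := abs_add_le (u y - u 0 - ⟪gradient u 0, y⟫) (u 0); linarith
        _ ≤ |u 0| + ‖gradient u 0‖ * ‖y‖ + ‖y‖ ^ 2 / 2 := by linarith
    have hIntμ : Integrable u μ :=
      Integrable.mono' (((integrable_const _).add (h1m.const_mul _)).add (hμ.div_const 2))
        hucont.aestronglyMeasurable (ae_of_all _ hub)
    have hIntν : Integrable u ν :=
      Integrable.mono' (((integrable_const _).add (h1ν.const_mul _)).add (hν2.div_const 2))
        hucont.aestronglyMeasurable (ae_of_all _ hub)
    have hIntν' : Integrable (fun x : E => u (l • x)) μ := by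
      have := (integrable_map_measure hucont.aestronglyMeasurable hmeas.aemeasurable).1 hIntν
      exact this
    have hmap : ∫ x, u x ∂ν = ∫ x, u (l • x) ∂μ :=
      integral_map hmeas.aemeasurable hucont.aestronglyMeasurable
    rw [hmap, ← integral_sub hIntν' hIntμ]
    have hInner : Integrable (fun x : E => ⟪gradient u 0, x⟫) μ := by
      simpa using (innerSL ℝ (gradient u 0)).integrable_comp hidInt
    have htarget : Integrable
        (fun x : E => (l - 1) * ⟪gradient u 0, x⟫ + (l ^ 2 - 1) / 2 * ‖x‖ ^ 2) μ :=
      (hInner.const_mul _).add (hμ.const_mul _)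
    calc ∫ x, (u (l • x) - u x) ∂μ
        ≤ ∫ x, ((l - 1) * ⟪gradient u 0, x⟫ + (l ^ 2 - 1) / 2 * ‖x‖ ^ 2) ∂μ :=
          integral_mono (hIntν'.sub hIntμ) htarget (fun x => pointwise_ub hu hL hl x)
      _ = (l ^ 2 - 1) / 2 * V := by
          rw [integral_add (hInner.const_mul _) (hμ.const_mul _), integral_const_mul,
            integral_const_mul, integral_inner hidInt, hcent, inner_zero_right]
          ring
  · set u₀ : E → ℝ := fun x => ‖x‖ ^ 2 / 2 with hu₀
    have hcd : ContDiff ℝ 1 u₀ := (contDiff_norm_sq ℝ).div_const 2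
    have hLip : LipschitzWith 1 (gradient u₀) := by
      rw [hu₀, grad_halfnormsq]; exact LipschitzWith.id
    have hval : ∫ x, u₀ x ∂ν - ∫ x, u₀ x ∂μ = (l ^ 2 - 1) / 2 * V := by
      have hh : ∀ (m : Measure E), ∫ x, u₀ x ∂m = (∫ x, ‖x‖ ^ 2 ∂m) / 2 := by
        intro m
        rw [hu₀, integral_div]
      rw [hh, hh, hν, nu_sq_integral μ hμ l]
      ring
    exact le_iSup_of_le u₀ (le_iSup_of_le hcd (le_iSup_of_le hLip (le_of_eq (by rw [hval]))))

end Aux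

theorem stmt18 (d : ℕ) (μ : Measure (EuclideanSpace ℝ (Fin d)))
    [IsProbabilityMeasure μ]
    (hμ : Integrable (fun x => ‖x‖ ^ 2) μ)
    (hcent : bary μ = 0) (hσ : 0 < Real.sqrt (var2 μ))
    (l : ℝ) (hl : 1 < l) :
    Z2 μ (μ.map (fun x => l • x)) = ENNReal.ofReal
      ((1 / 2 : ℝ) * (Real.sqrt (var2 μ) + Real.sqrt (var2 (μ.map (fun x => l • x))))
        * W2 μ (μ.map (fun x => l • x))) := by
  set E := EuclideanSpace ℝ (Fin d)
  set ν := μ.map (fun x : E => l • x) with hν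
  have hmeas : Measurable (fun x : E => l • x) := by fun_prop
  have hcent' : (∫ x, x ∂μ) = 0 := hcent
  set V := ∫ x, ‖x‖ ^ 2 ∂μ with hV
  have hV0 : (0:ℝ) ≤ V := integral_nonneg fun x => by positivity
  have hl0 : (0:ℝ) < l := lt_trans one_pos hl
  have hvarμ : var2 μ = V := by
    unfold var2
    rw [hcent]
    simp
    rfl
  have hidInt : Integrable (fun x : E => x) μ := by
    refine Integrable.mono' (g := fun x => 1 + ‖x‖ ^ 2) ((integrable_const 1).add hμ)
      continuous_id.aestronglyMeasurable (ae_of_all _ fun x => ?_)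
    have hx : ‖x‖ ≤ 1 + ‖x‖ ^ 2 := by nlinarith [sq_nonneg (‖x‖ - 1)]
    simpa using hx
  have hbaryν : bary ν = 0 := by
    show (∫ x, x ∂ν) = 0
    have hmapid : ∫ x, x ∂ν = ∫ x, (l • x) ∂μ :=
      integral_map (f := fun x : E => x) hmeas.aemeasurable continuous_id.aestronglyMeasurable
    rw [hmapid, integral_smul, hcent', smul_zero]
  have hvarν : var2 ν = l ^ 2 * V := by
    unfold var2
    rw [hbaryν]
    simp only [sub_zero]
    rw [hν]
    exact nu_sq_integral μ hμ l
  rw [z2_dilation μ hμ hcent' l hl]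
  have hw2 : W2 μ ν = (l - 1) * Real.sqrt V := by
    unfold W2
    rw [hν, w2sq_dilation μ hμ l hl, ENNReal.toReal_ofReal (by positivity)]
    rw [Real.sqrt_mul (by positivity), Real.sqrt_sq (by linarith)]
  have hsν : Real.sqrt (var2 ν) = l * Real.sqrt V := by
    rw [hvarν, Real.sqrt_mul (by positivity), Real.sqrt_sq (by linarith)]
  rw [hw2, hsν, hvarμ]
  congr 1
  have hs : Real.sqrt V * Real.sqrt V = V := Real.mul_self_sqrt hV0
  nlinarith [hs]
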